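/- Define the fast minus continued fraction map on real quadratic irrationals x > 1 by S(x) = 1/(⌈x⌉ − x). Then x is purely periodic under S if and only if x is reduced, i.e. x > 1 > x' > 0 where x' is the Galois conjugate of x. -/

import Mathlib

/-!
Follow `x` together with its conjugate `x'`: the pair map `(x, x') ↦ (S x, 1 / (⌈x⌉ - x'))` keeps
`(x, x')` a pair of roots of an integer quadratic of a fixed discriminant `D`. Once a conjugate
drops below `1`, all later ones lie in `(0, 1)`; as long as the new conjugates are `≥ 1`, the
distance `|x - x'|` grows strictly. Hence on a periodic orbit the conjugate lies in `(0, 1)`.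
Conversely, the coefficients of a reduced pair are bounded in terms of `D`, so the reduced pairs
of discriminant `D` form a finite set, on which the pair map is injective (`x' ∈ (0, 1)` recovers
`⌈x⌉` from `⌈x⌉ - x'`); every point of it is therefore periodic.
-/

noncomputable def fastMinusCF (x : ℝ) : ℝ := 1 / ((⌈x⌉ : ℝ) - x)

open Function Set

theorem Set.Finite.mem_periodicPts_of_injOn {α : Type*} {f : α → α} {s : Set α} (hs : s.Finite)
    (hmaps : MapsTo f s s) (hinj : InjOn f s) {x : α} (hx : x ∈ s) : x ∈ periodicPts f :=
  have : Finite s := hs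
  Semiconj.mapsTo_periodicPts (g := Subtype.val) (fun _ => rfl)
    ((hmaps.restrict_inj.mpr hinj).mem_periodicPts ⟨x, hx⟩)

theorem Irrational.eq_zero_of_intCast_mul_add_intCast_eq_zero {x : ℝ} (hx : Irrational x)
    {m k : ℤ} (h : m * x + k = 0) : m = 0 := by
  by_contra hm
  exact ((hx.intCast_mul hm).add_intCast k).ne_zero h

/-- Vieta's formulas for the roots `p.1`, `p.2` of `a X² + b X + c`: for irrational `p.1`,
`p.2` is its Galois conjugate. -/
def IsConjPair (D : ℤ) (p : ℝ × ℝ) : Prop :=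
  ∃ a b c : ℤ, a ≠ 0 ∧ b ^ 2 - 4 * a * c = D ∧ a * (p.1 + p.2) = -b ∧ a * (p.1 * p.2) = c

noncomputable def fastMinusCFPair (p : ℝ × ℝ) : ℝ × ℝ := (fastMinusCF p.1, 1 / (⌈p.1⌉ - p.2))

theorem semiconj_fst_fastMinusCFPair : Semiconj Prod.fst fastMinusCFPair fastMinusCF :=
  fun _ => rfl

namespace IsConjPair

variable {D : ℤ} {p : ℝ × ℝ}

theorem of_root {x : ℝ} {a b c : ℤ} (ha : a ≠ 0) (h : (a : ℝ) * x ^ 2 + b * x + c = 0) :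
    IsConjPair (b ^ 2 - 4 * a * c) (x, -(b : ℝ) / a - x) := by
  have ha' : (a : ℝ) ≠ 0 := by exact_mod_cast ha
  refine ⟨a, b, c, ha, rfl, ?_, ?_⟩ <;> field_simp
  · ring
  · linear_combination -h

theorem exists_pos (hp : IsConjPair D p) : ∃ a b c : ℤ, 0 < a ∧ b ^ 2 - 4 * a * c = D ∧
    a * (p.1 + p.2) = -b ∧ a * (p.1 * p.2) = c := by
  obtain ⟨a, b, c, ha, hD, hsum, hprod⟩ := hp
  rcases ha.lt_or_gt with ha | ha
  · refine ⟨-a, -b, -c, by omega, by rw [← hD]; ring, ?_, ?_⟩ <;> push_cast <;> linarith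
  · exact ⟨a, b, c, ha, hD, hsum, hprod⟩

theorem snd_ne_intCast (hp : IsConjPair D p) (hirr : Irrational p.1) (n : ℤ) : p.2 ≠ n := by
  obtain ⟨a, b, c, ha, -, hsum, -⟩ := hp
  rintro h
  refine ha (hirr.eq_zero_of_intCast_mul_add_intCast_eq_zero (k := a * n + b) ?_)
  rw [h] at hsum
  push_cast
  linarith

theorem fst_ne_snd (hp : IsConjPair D p) (hirr : Irrational p.1) : p.1 ≠ p.2 := by
  obtain ⟨a, b, c, ha, -, hsum, -⟩ := hp
  intro h
  have : (2 * a : ℤ) = 0 := hirr.eq_zero_of_intCast_mul_add_intCast_eq_zero (k := b) (by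
    push_cast; rw [h] at hsum ⊢; linarith)
  omega

theorem eq_of_fst_eq {D' : ℤ} {q : ℝ × ℝ} (hp : IsConjPair D p) (hq : IsConjPair D' q)
    (hirr : Irrational p.1) (h : p.1 = q.1) : p = q := by
  obtain ⟨x, e⟩ := p
  obtain ⟨y, e'⟩ := q
  obtain ⟨a, b, c, ha, -, hsum, hprod⟩ := hp
  obtain ⟨a', b', c', ha', -, hsum', hprod'⟩ := hq
  dsimp only at *
  subst h
  have hb : a' * b = a * b' := by
    refine sub_eq_zero.mp
      (hirr.eq_zero_of_intCast_mul_add_intCast_eq_zero (k := a' * c - a * c') ?_)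
    push_cast
    linear_combination (x * a') * hsum - (x * a) * hsum' - a' * hprod + a * hprod'
  have haa' : (a : ℝ) * a' ≠ 0 := by exact_mod_cast mul_ne_zero ha ha'
  have hb' : (a' : ℝ) * b = a * b' := by exact_mod_cast hb
  refine Prod.ext rfl (mul_left_cancel₀ haa' ?_)
  linear_combination a' * hsum - a * hsum' - hb'

theorem fastMinusCFPair (hp : IsConjPair D p) (hirr : Irrational p.1) :
    IsConjPair D (fastMinusCFPair p) := by
  obtain ⟨x, e⟩ := p
  have hx : (⌈x⌉ : ℝ) - x ≠ 0 := sub_ne_zero.mpr (hirr.ne_int _).symm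
  have he : (⌈x⌉ : ℝ) - e ≠ 0 := sub_ne_zero.mpr (hp.snd_ne_intCast hirr _).symm
  obtain ⟨a, b, c, ha, hD, hsum, hprod⟩ := hp
  dsimp only at *
  rw [fastMinusCFPair, fastMinusCF]
  set n := ⌈x⌉
  have hlead : ((a * n ^ 2 + b * n + c : ℤ) : ℝ) = a * (n - x) * (n - e) := by
    push_cast
    linear_combination (n : ℝ) * hsum - hprod
  refine ⟨a * n ^ 2 + b * n + c, -(2 * a * n + b), a, ?_, by rw [← hD]; ring, ?_, ?_⟩
  · have : (a : ℝ) * (n - x) * (n - e) ≠ 0 := mul_ne_zero (mul_ne_zero (by exact_mod_cast ha) hx) he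
    exact_mod_cast hlead ▸ this
  · rw [hlead]
    field_simp
    push_cast
    linear_combination -hsum
  · rw [hlead]
    field_simp

end IsConjPair

theorem Irrational.ceil_sub_mem_Ioo {x : ℝ} (hx : Irrational x) : (⌈x⌉ : ℝ) - x ∈ Ioo 0 1 :=
  ⟨sub_pos.mpr ((Int.le_ceil x).lt_of_ne (hx.ne_int _)), by linarith [Int.ceil_lt_add_one x]⟩

theorem Irrational.fastMinusCF {x : ℝ} (hx : Irrational x) : Irrational (fastMinusCF x) := by
  rw [_root_.fastMinusCF, one_div]
  exact (hx.intCast_sub ⌈x⌉).inv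

theorem one_lt_fastMinusCF {x : ℝ} (hx : Irrational x) : 1 < fastMinusCF x := by
  obtain ⟨h0, h1⟩ := hx.ceil_sub_mem_Ioo
  rw [fastMinusCF, lt_div_iff₀ h0]
  linarith

def conjPairs (D : ℤ) : Set (ℝ × ℝ) := {p | Irrational p.1 ∧ 1 < p.1 ∧ IsConjPair D p}

def reducedPairs (D : ℤ) : Set (ℝ × ℝ) := conjPairs D ∩ {p | p.2 ∈ Ioo 0 1}

theorem mapsTo_fastMinusCFPair_conjPairs (D : ℤ) :
    MapsTo fastMinusCFPair (conjPairs D) (conjPairs D) := fun _ ⟨hirr, _, hp⟩ =>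
  ⟨hirr.fastMinusCF, one_lt_fastMinusCF hirr, hp.fastMinusCFPair hirr⟩

theorem snd_fastMinusCFPair_mem_Ioo {p : ℝ × ℝ} (h1 : 1 < p.1) (h2 : p.2 < 1) :
    (fastMinusCFPair p).2 ∈ Ioo 0 1 := by
  have hceil : (2 : ℝ) ≤ ⌈p.1⌉ := by
    exact_mod_cast (Int.lt_ceil.mpr (by exact_mod_cast h1 : ((1 : ℤ) : ℝ) < p.1))
  have hden : 1 < (⌈p.1⌉ : ℝ) - p.2 := by linarith
  exact ⟨by simp only [fastMinusCFPair]; positivity, (div_lt_one (by linarith)).mpr hden⟩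

theorem mapsTo_fastMinusCFPair_reducedPairs (D : ℤ) :
    MapsTo fastMinusCFPair (reducedPairs D) (reducedPairs D) := fun _ ⟨hp, he⟩ =>
  ⟨mapsTo_fastMinusCFPair_conjPairs D hp, snd_fastMinusCFPair_mem_Ioo hp.2.1 he.2⟩

theorem injOn_fastMinusCFPair : InjOn fastMinusCFPair {p | p.2 ∈ Ioo 0 1} := by
  rintro ⟨x, e⟩ ⟨he0, he1⟩ ⟨y, f⟩ ⟨hf0, hf1⟩ h
  simp only [fastMinusCFPair, fastMinusCF, Prod.mk.injEq, one_div, inv_inj] at h ⊢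
  obtain ⟨hx, he⟩ := h
  have hceil : ⌈x⌉ = ⌈y⌉ := by
    have h1 : ⌈x⌉ < ⌈y⌉ + 1 := by exact_mod_cast (show (⌈x⌉ : ℝ) < ⌈y⌉ + 1 by linarith)
    have h2 : ⌈y⌉ < ⌈x⌉ + 1 := by exact_mod_cast (show (⌈y⌉ : ℝ) < ⌈x⌉ + 1 by linarith)
    omega
  rw [hceil] at hx he
  constructor <;> linarith

theorem abs_sub_lt_abs_fastMinusCFPair {p : ℝ × ℝ} (hirr : Irrational p.1) (hne : p.1 ≠ p.2)
    (h : 1 ≤ (fastMinusCFPair p).2) :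
    |p.1 - p.2| < |(fastMinusCFPair p).1 - (fastMinusCFPair p).2| := by
  obtain ⟨x, e⟩ := p
  obtain ⟨hu0, hu1⟩ := hirr.ceil_sub_mem_Ioo
  simp only [fastMinusCFPair, fastMinusCF] at h ⊢
  set u := (⌈x⌉ : ℝ) - x
  set v := (⌈x⌉ : ℝ) - e
  have hv0 : 0 < v := one_div_pos.mp (one_pos.trans_le h)
  have hv1 : v ≤ 1 := by rwa [le_div_iff₀ hv0, one_mul] at h
  have hdiff : 1 / u - 1 / v = (x - e) / (u * v) := by
    field_simp
    ring
  have huv : u * v < 1 := by nlinarith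
  rw [hdiff, abs_div, abs_of_pos (mul_pos hu0 hv0), lt_div_iff₀ (mul_pos hu0 hv0)]
  exact mul_lt_of_lt_one_right (abs_pos.mpr (sub_ne_zero.mpr hne)) huv

theorem snd_mem_Ioo_of_isPeriodicPt {D : ℤ} {p : ℝ × ℝ} (hp : p ∈ conjPairs D) {n : ℕ}
    (hn : 0 < n) (hper : IsPeriodicPt fastMinusCFPair n p) : p.2 ∈ Ioo 0 1 := by
  have horbit : ∀ k, fastMinusCFPair^[k] p ∈ conjPairs D :=
    fun k => (mapsTo_fastMinusCFPair_conjPairs D).iterate k hp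
  obtain ⟨k, hk⟩ : ∃ k, (fastMinusCFPair^[k] p).2 < 1 := by
    by_contra! hge
    have hmono : StrictMono fun k => |(fastMinusCFPair^[k] p).1 - (fastMinusCFPair^[k] p).2| := by
      refine strictMono_nat_of_lt_succ fun k => ?_
      obtain ⟨hirr, -, hconj⟩ := horbit k
      simp only [iterate_succ_apply']
      exact abs_sub_lt_abs_fastMinusCFPair hirr (hconj.fst_ne_snd hirr)
        (iterate_succ_apply' fastMinusCFPair k p ▸ hge (k + 1))
    exact (hmono hn).ne (by simp only [hper.eq, iterate_zero_apply])
  have hlater : ∀ j, k < j → (fastMinusCFPair^[j] p).2 ∈ Ioo 0 1 := by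
    intro j hj
    induction j, hj using Nat.le_induction with
    | base =>
      rw [iterate_succ_apply']
      exact snd_fastMinusCFPair_mem_Ioo (horbit k).2.1 hk
    | succ j _ ih =>
      rw [iterate_succ_apply']
      exact snd_fastMinusCFPair_mem_Ioo (horbit j).2.1 ih.2
  have := hlater (n * (k + 1)) (by nlinarith)
  rwa [(hper.mul_const (k + 1)).eq] at this

theorem subsingleton_vieta {a : ℤ} (ha : a ≠ 0) (b c : ℤ) :
    {p : ℝ × ℝ | 1 < p.1 ∧ p.2 < 1 ∧ a * (p.1 + p.2) = -b ∧ a * (p.1 * p.2) = c}.Subsingleton := by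
  rintro ⟨x, e⟩ ⟨hx, -, hs, hp⟩ ⟨y, f⟩ ⟨-, hf, hs', hp'⟩
  have ha' : (a : ℝ) ≠ 0 := by exact_mod_cast ha
  have hsum : x + e = y + f := mul_left_cancel₀ ha' (hs.trans hs'.symm)
  have hprod : x * e = y * f := mul_left_cancel₀ ha' (hp.trans hp'.symm)
  have hxy : x = y := by
    have : (x - y) * (x - f) = 0 := by linear_combination x * hsum - hprod
    rcases mul_eq_zero.mp this with h | h <;> linarith
  simp only [Prod.mk.injEq]
  constructor <;> linarith

theorem IsConjPair.exists_coeffs_mem_Icc {D : ℤ} {p : ℝ × ℝ} (hp : IsConjPair D p)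
    (h1 : 1 < p.1) (he : p.2 ∈ Ioo 0 1) :
    ∃ t ∈ Icc ((1 : ℤ), -D, (1 : ℤ)) (D, -1, D),
      t.1 * (p.1 + p.2) = -t.2.1 ∧ t.1 * (p.1 * p.2) = t.2.2 := by
  obtain ⟨x, e⟩ := p
  obtain ⟨a, b, c, ha, hD, hsum, hprod⟩ := hp.exists_pos
  obtain ⟨he0, he1⟩ := he
  dsimp only at *
  have haR : (0 : ℝ) < a := by exact_mod_cast ha
  have hc : 0 < c := by
    have : (0 : ℝ) < c := by rw [← hprod]; have := lt_trans one_pos h1; positivity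
    exact_mod_cast this
  have habc : a + b + c < 0 := by
    have : ((a + b + c : ℤ) : ℝ) = -(a * (x - 1) * (1 - e)) := by
      push_cast
      linear_combination hsum - hprod
    have hpos : 0 < (a : ℝ) * (x - 1) * (1 - e) := by
      have := sub_pos.mpr h1; have := sub_pos.mpr he1; positivity
    exact_mod_cast this ▸ neg_neg_of_pos hpos
  -- `D = (-b - a - c)(-b + a + c) + (a - c)²` with `-b - a - c ≥ 1`
  have hD' : -b + a + c ≤ D := by
    nlinarith [mul_nonneg (by omega : (0 : ℤ) ≤ -b - a - c - 1) (by omega : (0 : ℤ) ≤ -b + a + c),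
      sq_nonneg (a - c)]
  refine ⟨(a, b, c), ?_, hsum, hprod⟩
  simp only [mem_Icc, Prod.mk_le_mk]
  omega

theorem reducedPairs_finite (D : ℤ) : (reducedPairs D).Finite := by
  refine ((finite_Icc ((1 : ℤ), -D, (1 : ℤ)) (D, -1, D)).biUnion fun t ht =>
    (subsingleton_vieta (a := t.1) (by have := ht.1.1; omega) t.2.1 t.2.2).finite).subset ?_
  rintro p ⟨⟨-, h1, hp⟩, he⟩
  obtain ⟨t, ht, hvieta⟩ := hp.exists_coeffs_mem_Icc h1 he
  exact mem_biUnion ht ⟨h1, he.2, hvieta⟩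

theorem mem_periodicPts_of_mem_reducedPairs {D : ℤ} {p : ℝ × ℝ} (hp : p ∈ reducedPairs D) :
    p ∈ periodicPts fastMinusCFPair :=
  (reducedPairs_finite D).mem_periodicPts_of_injOn (mapsTo_fastMinusCFPair_reducedPairs D)
    (injOn_fastMinusCFPair.mono inter_subset_right) hp

theorem stmt_10 (x : ℝ) (hirr : Irrational x)
    (a b c : ℤ) (ha : a ≠ 0)
    (hroot : (a : ℝ) * x ^ 2 + (b : ℝ) * x + (c : ℝ) = 0)
    (hx : 1 < x) :
    (∃ n : ℕ, 0 < n ∧ fastMinusCF^[n] x = x) ↔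
      (1 < x ∧ -(b : ℝ) / (a : ℝ) - x < 1 ∧ 0 < -(b : ℝ) / (a : ℝ) - x) := by
  set p : ℝ × ℝ := (x, -(b : ℝ) / a - x)
  have hp : p ∈ conjPairs (b ^ 2 - 4 * a * c) := ⟨hirr, hx, IsConjPair.of_root ha hroot⟩
  have hfst (n : ℕ) (q : ℝ × ℝ) : (fastMinusCFPair^[n] q).1 = fastMinusCF^[n] q.1 :=
    semiconj_fst_fastMinusCFPair.iterate_right n q
  constructor
  · rintro ⟨n, hn, hper⟩
    have hpair : IsPeriodicPt fastMinusCFPair n p :=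
      (hp.2.2.eq_of_fst_eq ((mapsTo_fastMinusCFPair_conjPairs _).iterate n hp).2.2 hirr
        (by rw [hfst, hper])).symm
    obtain ⟨h0, h1⟩ := snd_mem_Ioo_of_isPeriodicPt hp hn hpair
    exact ⟨hx, h1, h0⟩
  · rintro ⟨-, h1, h0⟩
    obtain ⟨n, hn, hper⟩ := mem_periodicPts_of_mem_reducedPairs ⟨hp, h0, h1⟩
    exact ⟨n, hn, by simpa only [hfst] using congrArg Prod.fst hper.eq⟩
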